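/- The 2-cocycle ξ on R_3 (ξ(e_1,x) = e_1, ξ(e_i,x) = (i-2)e_i for 3 ≤ i ≤ n, ξ(x,e_1) = -e_1) is not a 2-coboundary: there is no linear map d: R_3 → R_3 with ξ(a,b) = [d(a),b] + [a,d(b)] - d([a,b]) for all a,b. -/
import Mathlib


/-- Coordinate of `u` at a natural-number index, zero out of range. -/
def cf {m : ℕ} (u : Fin m → ℂ) (j : ℕ) : ℂ := if h : j < m then u ⟨j, h⟩ else 0

/-- The bracket of `R_3` on the basis `e_1, …, e_n, x`:
`[e_i,e_1] = e_{i+1}` (`2 ≤ i ≤ n-1`), `[x,e_1] = -e_1`, `[e_1,x] = e_1`,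
`[e_i,x] = (i-n)·e_i` (`2 ≤ i ≤ n`), `[x,x] = e_n`, other products zero. -/
def r3br (n : ℕ) (u v : Fin (n + 1) → ℂ) : Fin (n + 1) → ℂ := fun k =>
  if (k : ℕ) = 0 then -(cf u n) * cf v 0 + cf u 0 * cf v n
  else if (k : ℕ) < n then
    (if 2 ≤ (k : ℕ) then cf u ((k : ℕ) - 1) * cf v 0 else 0)
    + ((((k : ℕ) : ℂ) + 1) - (n : ℂ)) * cf u (k : ℕ) * cf v n
    + (if (k : ℕ) = n - 1 then cf u n * cf v n else 0)
  else 0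

/-- The bilinear map `ξ` on `R_3`: `ξ(e_1,x) = e_1`, `ξ(e_i,x) = (i-2)e_i` for
`3 ≤ i ≤ n`, `ξ(x,e_1) = -e_1`, all other values on basis pairs zero. -/
def xi3 (n : ℕ) (u v : Fin (n + 1) → ℂ) : Fin (n + 1) → ℂ := fun k =>
  if (k : ℕ) = 0 then cf u 0 * cf v n - cf u n * cf v 0
  else if 2 ≤ (k : ℕ) ∧ (k : ℕ) ≤ n - 1 then
    (((k : ℕ) : ℂ) - 1) * cf u (k : ℕ) * cf v n
  else 0


/-- The 2-cocycle `ξ` on `R_3` (`n ≥ 4`) is not a 2-coboundary: there is no linear map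
`d` with `ξ(a,b) = [d(a),b] + [a,d(b)] - d([a,b])` for all `a, b`. -/
theorem xi_is_not_coboundary (n : ℕ) (hn : 4 ≤ n) :
    ¬ ∃ d : (Fin (n + 1) → ℂ) →ₗ[ℂ] (Fin (n + 1) → ℂ),
      ∀ a b : Fin (n + 1) → ℂ,
        xi3 n a b = r3br n (d a) b + r3br n a (d b) - d (r3br n a b) := by
  rintro ⟨d, h⟩
  set a : Fin (n + 1) → ℂ := fun j => if (j : ℕ) = n - 1 then 1 else 0 with ha
  set b : Fin (n + 1) → ℂ := fun j => if (j : ℕ) = n then 1 else 0 with hb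
  have cfa : ∀ j : ℕ, j < n + 1 → cf a j = if j = n - 1 then 1 else 0 := by
    intro j hj; simp [cf, hj, ha]
  have cfb : ∀ j : ℕ, j < n + 1 → cf b j = if j = n then 1 else 0 := by
    intro j hj; simp [cf, hj, hb]
  have hcast : (((n - 1 : ℕ) : ℂ) + 1) - (n : ℂ) = 0 := by
    have h1 : ((n - 1 : ℕ) : ℂ) = (n : ℂ) - 1 := by
      push_cast [Nat.cast_sub (by omega : 1 ≤ n)]; ring
    rw [h1]; ring
  have nb0 : cf b 0 = 0 := by rw [cfb 0 (by omega), if_neg (by omega)]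
  have nbn : cf b n = 1 := by rw [cfb n (by omega), if_pos rfl]
  have nan : cf a n = 0 := by rw [cfa n (by omega), if_neg (by omega)]
  have na0 : cf a 0 = 0 := by rw [cfa 0 (by omega), if_neg (by omega)]
  have na1 : cf a (n - 1) = 1 := by rw [cfa _ (by omega), if_pos rfl]
  have na2 : cf a (n - 1 - 1) = 0 := by rw [cfa _ (by omega), if_neg (by omega)]
  have nbk : ∀ j : ℕ, j < n → cf b j = 0 := fun j hj => by
    rw [cfb j (by omega), if_neg (by omega)]
  -- r3br a b = 0
  have hab : r3br n a b = 0 := by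
    funext k
    simp only [r3br, Pi.zero_apply]
    rcases Nat.eq_zero_or_pos (k : ℕ) with h0 | h0
    · rw [if_pos h0, nan, nb0, na0, nbn]; ring
    · rw [if_neg (by omega)]
      by_cases hk : (k : ℕ) < n
      · rw [if_pos hk]
        by_cases hk1 : (k : ℕ) = n - 1
        · rw [hk1, if_pos (by omega), if_pos rfl, nb0, nan, hcast]; ring
        · have t2 : cf a (k : ℕ) = 0 := by rw [cfa _ (by omega), if_neg hk1]
          rw [nb0, t2, if_neg hk1]
          by_cases h2 : 2 ≤ (k : ℕ)
          · rw [if_pos h2]; ring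
          · rw [if_neg h2]; ring
      · rw [if_neg hk]
  -- r3br b b = a
  have hbb : r3br n b b = a := by
    funext k
    have hk' : (k : ℕ) < n + 1 := k.isLt
    show r3br n b b k = if (k : ℕ) = n - 1 then 1 else 0
    simp only [r3br]
    rcases Nat.eq_zero_or_pos (k : ℕ) with h0 | h0
    · rw [if_pos h0, nbn, nb0, if_neg (by omega)]; ring
    · rw [if_neg (by omega)]
      by_cases hk : (k : ℕ) < n
      · rw [if_pos hk, nb0, nbk _ hk]
        by_cases hk1 : (k : ℕ) = n - 1
        · rw [if_pos hk1, if_pos hk1, nbn]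
          by_cases h2 : 2 ≤ (k : ℕ)
          · rw [if_pos h2]; ring
          · rw [if_neg h2]; ring
        · rw [if_neg hk1, if_neg hk1]
          by_cases h2 : 2 ≤ (k : ℕ)
          · rw [if_pos h2]; ring
          · rw [if_neg h2]; ring
      · rw [if_neg hk, if_neg (by omega)]
  -- first equation: (d a) at index n is 0
  have e1 : d a ⟨n, by omega⟩ = 0 := by
    have key := congrFun (h b b) ⟨n, by omega⟩
    rw [hbb] at key
    simp only [xi3, r3br, Pi.add_apply, Pi.sub_apply] at key
    simp only [show ¬ (n = 0) from by omega, show ¬ (n < n) from by omega,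
      show ¬ (2 ≤ n ∧ n ≤ n - 1) from by omega, if_false] at key
    linear_combination key
  -- second equation at index n-1
  have e2 := congrFun (h a b) ⟨n - 1, by omega⟩
  rw [hab, map_zero] at e2
  simp only [xi3, r3br, Pi.add_apply, Pi.sub_apply, Pi.zero_apply] at e2
  simp only [show ¬ (n - 1 = 0) from by omega, show n - 1 < n from by omega,
    show (2 : ℕ) ≤ n - 1 from by omega, show n - 1 ≤ n - 1 from le_refl _,
    show n - 1 = n - 1 from rfl, and_self, if_true, if_false, ite_true] at e2
  have t6 : cf (d a) n = d a ⟨n, by omega⟩ := by rw [cf, dif_pos (by omega)]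
  rw [na1, nbn, nb0, na2, nan, t6, e1, hcast] at e2
  have hne : ((n - 1 : ℕ) : ℂ) - 1 ≠ 0 := by
    have h1 : ((n - 1 : ℕ) : ℂ) = (n : ℂ) - 1 := by
      push_cast [Nat.cast_sub (by omega : 1 ≤ n)]; ring
    rw [h1]
    intro hc
    have h2 : (n : ℂ) = 2 := by linear_combination hc
    have h3 : (n : ℕ) = 2 := by exact_mod_cast h2
    omega
  apply hne
  linear_combination e2
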